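/- For every g in the stabilizer C(Γ^k(S)) of all rank-k germs of an orthohedral set S, the sum of the corank-1 germ flows over all rank-k germs vanishes: Σ_{γ ∈ Γ^k(S)} fl_γ(g) = 0. -/

import Mathlib

open Pointwise

namespace PeiPaper

/-- Points of the face of the standard orthant spanned by the canonical basis vectors in `Y`. -/
def stdFace (N : ℕ) (Y : Finset (Fin N)) : Set (Fin N → ℤ) :=
  {v | (∀ i, 0 ≤ v i) ∧ ∀ i, i ∉ Y → v i = 0}

/-- Integral orthogonal matrix. -/
def IsOrthMat {N : ℕ} (A : Matrix (Fin N) (Fin N) ℤ) : Prop :=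
  A * A.transpose = 1

/-- `L` is an integral orthant of rank `k` in `ℤ^N`: an affine-orthogonal image of a
rank-`k` face of the standard orthant. -/
def IsOrthantOfRank {N : ℕ} (L : Set (Fin N → ℤ)) (k : ℕ) : Prop :=
  ∃ (a : Fin N → ℤ) (A : Matrix (Fin N) (Fin N) ℤ) (Y : Finset (Fin N)),
    IsOrthMat A ∧ Y.card = k ∧ L = (fun v => a + A.mulVec v) '' stdFace N Y

def IsOrthant {N : ℕ} (L : Set (Fin N → ℤ)) : Prop := ∃ k, IsOrthantOfRank L k

/-- `S` is orthohedral: a finite union of integral orthants. -/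
def IsOrthohedral {N : ℕ} (S : Set (Fin N → ℤ)) : Prop :=
  ∃ 𝓛 : Set (Set (Fin N → ℤ)), 𝓛.Finite ∧ (∀ L ∈ 𝓛, IsOrthant L) ∧ S = ⋃₀ 𝓛

/-- The rank of a set: the maximal rank of an orthant contained in it. -/
noncomputable def orthRank {N : ℕ} (S : Set (Fin N → ℤ)) : ℕ :=
  sSup {k | ∃ L, IsOrthantOfRank L k ∧ L ⊆ S}

/-- Commensurability: the intersection is nonempty and has the same rank as both sets. -/
def Commensurable {N : ℕ} (L L' : Set (Fin N → ℤ)) : Prop :=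
  (L ∩ L').Nonempty ∧ orthRank L = orthRank (L ∩ L') ∧ orthRank L' = orthRank (L ∩ L')

/-- The rank-`k` orthants contained in `S`. -/
def germSet {N : ℕ} (S : Set (Fin N → ℤ)) (k : ℕ) : Set (Set (Fin N → ℤ)) :=
  {L | IsOrthantOfRank L k ∧ L ⊆ S}

/-- The rank-`k` germs of `S`: commensurability classes of rank-`k` orthants of `S`. -/
def Germ {N : ℕ} (S : Set (Fin N → ℤ)) (k : ℕ) : Type _ :=
  Quot (fun L L' : germSet S k => Commensurable L.1 L'.1)

def germOf {N : ℕ} (S : Set (Fin N → ℤ)) (k : ℕ) (L : germSet S k) : Germ S k :=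
  Quot.mk _ L

/-- The number of rank-`k` germs of `S` (as a natural number; `0` if infinite). -/
noncomputable def heightAt {N : ℕ} (S : Set (Fin N → ℤ)) (k : ℕ) : ℕ :=
  Nat.card (Germ S k)

/-- The height of an orthohedral set: the number of germs of maximal rank. -/
noncomputable def height {N : ℕ} (S : Set (Fin N → ℤ)) : ℕ :=
  heightAt S (orthRank S)

/-- `f` is (the restriction of) an isometry of `ℤ^N` on `L`. -/
def IsometricOn {N : ℕ} (f : (Fin N → ℤ) → (Fin N → ℤ)) (L : Set (Fin N → ℤ)) : Prop :=
  ∃ (a : Fin N → ℤ) (A : Matrix (Fin N) (Fin N) ℤ),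
    IsOrthMat A ∧ ∀ x ∈ L, f x = a + A.mulVec x

/-- `f` is (the restriction of) a translation on `L`. -/
def TranslationOn {N : ℕ} (f : (Fin N → ℤ) → (Fin N → ℤ)) (L : Set (Fin N → ℤ)) : Prop :=
  ∃ a : Fin N → ℤ, ∀ x ∈ L, f x = a + x

/-- `f` is a piecewise-Euclidean-isometric map on `S`. -/
def IsPeiMapOn {N : ℕ} (S : Set (Fin N → ℤ)) (f : (Fin N → ℤ) → (Fin N → ℤ)) : Prop :=
  ∃ 𝓛 : Set (Set (Fin N → ℤ)), 𝓛.Finite ∧ (∀ L ∈ 𝓛, IsOrthant L) ∧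
    S = ⋃₀ 𝓛 ∧ 𝓛.PairwiseDisjoint id ∧ ∀ L ∈ 𝓛, IsometricOn f L

/-- `f` is a piecewise-Euclidean-translation map on `S`. -/
def IsPetMapOn {N : ℕ} (S : Set (Fin N → ℤ)) (f : (Fin N → ℤ) → (Fin N → ℤ)) : Prop :=
  ∃ 𝓛 : Set (Set (Fin N → ℤ)), 𝓛.Finite ∧ (∀ L ∈ 𝓛, IsOrthant L) ∧
    S = ⋃₀ 𝓛 ∧ 𝓛.PairwiseDisjoint id ∧ ∀ L ∈ 𝓛, TranslationOn f L

def IsPeiIso {N : ℕ} (S S' : Set (Fin N → ℤ)) (f : (Fin N → ℤ) → (Fin N → ℤ)) : Prop :=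
  IsPeiMapOn S f ∧ Set.InjOn f S ∧ f '' S = S'

def PeiIsomorphic {N : ℕ} (S S' : Set (Fin N → ℤ)) : Prop := ∃ f, IsPeiIso S S' f

def IsPetIso {N : ℕ} (S S' : Set (Fin N → ℤ)) (f : (Fin N → ℤ) → (Fin N → ℤ)) : Prop :=
  IsPetMapOn S f ∧ Set.InjOn f S ∧ f '' S = S'

def PetIsomorphic {N : ℕ} (S S' : Set (Fin N → ℤ)) : Prop := ∃ f, IsPetIso S S' f

/-- A pei-permutation of `S`: a permutation of `ℤ^N` supported on `S` which is pei on `S`. -/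
def IsPeiPerm {N : ℕ} (S : Set (Fin N → ℤ)) (g : Equiv.Perm (Fin N → ℤ)) : Prop :=
  IsPeiMapOn S ⇑g ∧ ∀ x ∉ S, g x = x

/-- The element `g` has rank at most `k`: it is supported on an orthohedral set of rank `≤ k`. -/
def rankLE {N : ℕ} (g : Equiv.Perm (Fin N → ℤ)) (k : ℕ) : Prop :=
  ∃ T : Set (Fin N → ℤ), IsOrthohedral T ∧ orthRank T ≤ k ∧ ∀ x ∉ T, g x = x

/-- `g` fixes every rank-`k` germ of `S`. -/
def FixesGerm {N : ℕ} (S : Set (Fin N → ℤ)) (k : ℕ) (g : Equiv.Perm (Fin N → ℤ)) : Prop :=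
  ∀ L, IsOrthantOfRank L k → L ⊆ S →
    ∃ L', IsOrthantOfRank L' k ∧ L' ⊆ L ∧ Commensurable L L' ∧
      IsometricOn (⇑g) L' ∧ Commensurable (⇑g '' L') L

/-- `g` fixes every rank-`k` germ of `S` and acts on its tangent coset by a translation. -/
def TranslatesGerm {N : ℕ} (S : Set (Fin N → ℤ)) (k : ℕ) (g : Equiv.Perm (Fin N → ℤ)) : Prop :=
  ∀ L, IsOrthantOfRank L k → L ⊆ S →
    ∃ L' a, IsOrthantOfRank L' k ∧ L' ⊆ L ∧ Commensurable L L' ∧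
      (∀ x ∈ L', g x = a + x) ∧ Commensurable (⇑g '' L') L

/-- `σ` is the map induced by `g` on the rank-`k` germs of `S`. -/
def InducesGermMap {N : ℕ} (S : Set (Fin N → ℤ)) (k : ℕ) (g : Equiv.Perm (Fin N → ℤ))
    (σ : Germ S k → Germ S k) : Prop :=
  ∀ L : germSet S k, ∃ (L'' : Set (Fin N → ℤ)) (M : germSet S k),
    IsOrthantOfRank L'' k ∧ L'' ⊆ L.1 ∧ Commensurable L.1 L'' ∧
    M.1 = ⇑g '' L'' ∧ σ (germOf S k L) = germOf S k M

/-- A finitary permutation which is even (has sign `1` on a finite invariant subset). -/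
def IsEvenFinitary {α : Type*} (σ : Equiv.Perm α) : Prop :=
  ∃ (F : Finset α) (σF : Equiv.Perm F),
    (∀ a ∉ F, σ a = a) ∧ (∀ a : F, σ (a : α) = (σF a : α)) ∧
    @Equiv.Perm.sign F (Classical.decEq _) inferInstance σF = 1

/-- `g` induces an even finitary permutation on the rank-`k` germs of `S`. -/
def IsEvenOnGerms {N : ℕ} (S : Set (Fin N → ℤ)) (k : ℕ) (g : Equiv.Perm (Fin N → ℤ)) : Prop :=
  ∃ σ : Equiv.Perm (Germ S k), InducesGermMap S k g ⇑σ ∧ IsEvenFinitary σ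

/-- Ordering of germs (of arbitrary ranks): `p ≤ q` if they have representatives `L ⊆ L'`. -/
def germLE {N : ℕ} (S : Set (Fin N → ℤ)) (p q : Σ k, Germ S k) : Prop :=
  ∃ (L : germSet S p.1) (L' : germSet S q.1),
    germOf S p.1 L = p.2 ∧ germOf S q.1 L' = q.2 ∧ L.1 ⊆ L'.1

/-- A maximal germ of `S`. -/
def IsMaxGerm {N : ℕ} (S : Set (Fin N → ℤ)) (p : Σ k, Germ S k) : Prop :=
  ∀ q, germLE S p q → germLE S q p

/-- A `0`-based orthant. -/
def IsBasedOrthant {N : ℕ} (L0 : Set (Fin N → ℤ)) : Prop :=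
  ∃ (A : Matrix (Fin N) (Fin N) ℤ) (Y : Finset (Fin N)),
    IsOrthMat A ∧ L0 = (fun v => A.mulVec v) '' stdFace N Y

/-- Two (oriented) parallel orthants. -/
def ParallelOrthants {N : ℕ} (L L' : Set (Fin N → ℤ)) : Prop :=
  ∃ a : Fin N → ℤ, L' = a +ᵥ L

/-- The indicator image `S_τ` of `S`: the union of the `0`-based parallel translates of
the orthants contained in `S`. -/
def indicatorImage {N : ℕ} (S : Set (Fin N → ℤ)) : Set (Fin N → ℤ) :=
  ⋃₀ {L0 | IsBasedOrthant L0 ∧ ∃ a : Fin N → ℤ, (a +ᵥ L0) ⊆ S}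

/-- The height function `h_S`: the number of maximal germs of `S` whose indicator is `L0`. -/
noncomputable def hFun {N : ℕ} (S : Set (Fin N → ℤ)) (L0 : Set (Fin N → ℤ)) : ℕ :=
  Nat.card {p : Σ k, Germ S k //
    IsMaxGerm S p ∧ ∃ L : germSet S p.1, germOf S p.1 L = p.2 ∧ ∃ a : Fin N → ℤ, L.1 = a +ᵥ L0}

/-- `S` is quasi-normal: the maximal based orthants of `S_τ` are exactly the support of `h_S`. -/
def QuasiNormal {N : ℕ} (S : Set (Fin N → ℤ)) : Prop :=
  ∀ L0 : Set (Fin N → ℤ),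
    (IsBasedOrthant L0 ∧ L0 ⊆ indicatorImage S ∧
      ∀ L1, IsBasedOrthant L1 → L1 ⊆ indicatorImage S → L0 ⊆ L1 → L1 ⊆ L0)
    ↔ (IsBasedOrthant L0 ∧ 0 < hFun S L0)

/-- The germ `q` of `S'` is the image of the germ `p` of `S` under the injective pei-map `f`. -/
def GermMapsTo {N : ℕ} (f : (Fin N → ℤ) → (Fin N → ℤ)) (S S' : Set (Fin N → ℤ))
    (p : Σ k, Germ S k) (q : Σ k, Germ S' k) : Prop :=
  p.1 = q.1 ∧ ∃ (L : germSet S p.1) (L'' : Set (Fin N → ℤ)) (M : germSet S' q.1),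
    germOf S p.1 L = p.2 ∧ IsOrthantOfRank L'' p.1 ∧ L'' ⊆ L.1 ∧ Commensurable L.1 L'' ∧
    M.1 = f '' L'' ∧ germOf S' q.1 M = q.2

/-- A stack of `h` parallel rank-`n` orthants. -/
def IsStack {N : ℕ} (S : Set (Fin N → ℤ)) (n h : ℕ) : Prop :=
  ∃ (L0 : Set (Fin N → ℤ)) (a : Fin h → (Fin N → ℤ)),
    IsOrthantOfRank L0 n ∧
    (Pairwise fun i j => Disjoint (a i +ᵥ L0) (a j +ᵥ L0)) ∧
    S = ⋃ i, a i +ᵥ L0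

/-- A coordinate half-space of `ℤ^N`. -/
def IsHalfSpace {N : ℕ} (H : Set (Fin N → ℤ)) : Prop :=
  ∃ (i : Fin N) (c : ℤ), H = {x | x i ≤ c} ∨ H = {x | c ≤ x i}

/-- The canonical embedding `ℤ^N → ℤ^{N+1}`. -/
def emb (N : ℕ) (x : Fin N → ℤ) : Fin (N + 1) → ℤ :=
  fun i => if h : (i : ℕ) < N then x ⟨i, h⟩ else 0

/-- The sum of all matrix entries of a finitely supported family of vectors. -/
noncomputable def totalSum (k : ℕ) (Γ : Type*) : (Γ →₀ (Fin k → ℤ)) →+ ℤ :=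
  Finsupp.liftAddHom (fun _ => ∑ i : Fin k, Pi.evalAddMonoidHom (fun _ => ℤ) i)

/-- The clique (flag) complex of a graph. -/
def cliqueComplex {V : Type*} (G : SimpleGraph V) : Set (Finset V) :=
  {s | s.Nonempty ∧ G.IsClique (s : Set V)}

/-- The geometric realization of a simplicial complex on vertex set `V`. -/
def realization {V : Type*} (K : Set (Finset V)) : Set (V → ℝ) :=
  {f | (∀ v, 0 ≤ f v) ∧ ∃ s ∈ K, Function.support f ⊆ ↑s ∧ ∑ v ∈ s, f v = 1}

/-- A wedge (bouquet) of `n`-spheres indexed by `ι`, with basepoint `b`. -/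
noncomputable def wedgeSpheres (ι : Type) (n : ℕ)
    (b : Metric.sphere (0 : EuclideanSpace ℝ (Fin (n + 1))) 1) : Type :=
  Quot (fun p q : Unit ⊕ (ι × Metric.sphere (0 : EuclideanSpace ℝ (Fin (n + 1))) 1) =>
    (Sum.elim (fun _ => True) (fun pr => pr.2 = b) p) ∧
    (Sum.elim (fun _ => True) (fun qr => qr.2 = b) q))

noncomputable instance (ι : Type) (n : ℕ) (b : Metric.sphere (0 : EuclideanSpace ℝ (Fin (n + 1))) 1) :
    TopologicalSpace (wedgeSpheres ι n b) :=
  letI : TopologicalSpace ι := ⊥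
  instTopologicalSpaceQuot


/-!
Integral orthogonal matrices are signed permutation matrices, so an integral orthant is a product
of coordinate atoms, each a point or a ray of `ℤ`. Two orthants of the same rank are commensurable
exactly when they have the same points and the same ray directions; this data (`germ`) names the
germs, and `heightAt X j` counts the rank-`j` germ codes `germsIn j X`.

Write `j = k - 1`. For `L ∈ Λ` the flow is `#(G L \ G gL) - #(G gL \ G L)` with `G = germsIn j`,
and both differences are finite since `L` and `gL` are commensurable. As the `L ∈ Λ` are disjoint,
the sum of the flows is `#(W \ ⋃ G gL) - #(W \ ⋃ G L)`, where `W = G (T ∩ S)` contains every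
difference because `g` is the identity off `T`. The set `W \ ⋃ G L` is finite, since every
rank-`k` orthant of `T ∩ S` is commensurable with some `L ∈ Λ`; and the bijection induced by `g`
on germ codes maps it onto `W \ ⋃ G gL`. Hence the sum vanishes.

The germ map exists because an orthant shifted far enough along its rays eventually lies inside,
or eventually avoids, any given orthant; so some representative of each germ lies in a single
piece of `g` or outside its support, where `g` is an isometry.
-/

open Filter

structure Atom where
  base : ℤ
  dir : Option Bool

namespace Atom

instance : Inhabited Atom := ⟨⟨0, none⟩⟩

def set : Atom → Set ℤ
  | ⟨a, none⟩ => {a}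
  | ⟨a, some true⟩ => Set.Ici a
  | ⟨a, some false⟩ => Set.Iic a

def germ : Atom → ℤ ⊕ Bool
  | ⟨a, none⟩ => .inl a
  | ⟨_, some b⟩ => .inr b

def ofGerm : ℤ ⊕ Bool → Atom
  | .inl a => ⟨a, none⟩
  | .inr b => ⟨0, some b⟩

def shift : Atom → ℕ → Atom
  | ⟨a, none⟩, _ => ⟨a, none⟩
  | ⟨a, some true⟩, n => ⟨a + n, some true⟩
  | ⟨a, some false⟩, n => ⟨a - n, some false⟩

lemma germ_ofGerm (c : ℤ ⊕ Bool) : (ofGerm c).germ = c := by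
  cases c <;> rfl

lemma isSome_dir_eq_of_germ_eq {a b : Atom} (h : a.germ = b.germ) :
    a.dir.isSome = b.dir.isSome := by
  rcases a with ⟨a, _ | _ | _⟩ <;> rcases b with ⟨b, _ | _ | _⟩ <;> simp_all [germ]

lemma germ_eq_inl_of_dir_eq_none {a : Atom} (h : a.dir = none) : a.germ = .inl a.base := by
  rcases a with ⟨a, _ | _⟩ <;> simp_all [germ]

lemma base_mem_set (a : Atom) : a.base ∈ a.set := by
  rcases a with ⟨a, _ | _ | _⟩ <;> simp [set]

lemma set_subset_set_iff {a b : Atom} :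
    a.set ⊆ b.set ↔ a.base ∈ b.set ∧ (a.dir = none ∨ a.dir = b.dir) := by
  refine ⟨fun h => ⟨h a.base_mem_set, ?_⟩, ?_⟩
  · rcases a with ⟨a, _ | _ | _⟩ <;> rcases b with ⟨b, _ | _ | _⟩ <;> simp only [true_or,
      or_true] <;> simp only [set, Set.subset_def, Set.mem_Ici, Set.mem_Iic,
      Set.mem_singleton_iff] at h
    all_goals first
      | have := h (min a b - 1) (by omega); omega
      | have := h (max a b + 1) (by omega); omega
  · rcases a with ⟨a, _ | _ | _⟩ <;> rcases b with ⟨b, _ | _ | _⟩ <;>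
      simp [set, Set.subset_def] <;> omega

lemma dir_eq_of_set_subset {a b : Atom} (h : a.set ⊆ b.set) (ha : a.dir.isSome) :
    a.dir = b.dir :=
  (set_subset_set_iff.1 h).2.resolve_left (Option.isSome_iff_ne_none.1 ha)

lemma germ_eq_of_set_subset {a b : Atom} (h : a.set ⊆ b.set)
    (hab : a.dir.isSome = b.dir.isSome) : a.germ = b.germ := by
  obtain ⟨hmem, hdir⟩ := set_subset_set_iff.1 h
  rcases a with ⟨a, _ | _ | _⟩ <;> rcases b with ⟨b, _ | _ | _⟩ <;>
    simp_all [set, germ]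

lemma finite_set_sdiff_of_germ_eq {a b : Atom} (h : a.germ = b.germ) :
    (a.set \ b.set).Finite := by
  rcases a with ⟨a, _ | _ | _⟩ <;> rcases b with ⟨b, _ | _ | _⟩ <;> simp only [germ,
    Sum.inl.injEq, reduceCtorEq, Sum.inr.injEq, Bool.false_eq_true, Bool.true_eq_false] at h
  · simp [set, h]
  · exact (Set.finite_Icc b a).subset fun z hz => by simp_all [set]; omega
  · exact (Set.finite_Icc a b).subset fun z hz => by simp_all [set]; omega

lemma exists_set_eq_inter_of_germ_eq {a b : Atom} (h : a.germ = b.germ) :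
    ∃ c : Atom, c.germ = a.germ ∧ c.set = a.set ∩ b.set := by
  rcases a with ⟨a, _ | _ | _⟩ <;> rcases b with ⟨b, _ | _ | _⟩ <;> simp only [germ,
    Sum.inl.injEq, reduceCtorEq, Sum.inr.injEq, Bool.false_eq_true, Bool.true_eq_false] at h
  · exact ⟨⟨a, none⟩, rfl, by simp [set, h]⟩
  · exact ⟨⟨min a b, some false⟩, rfl, by simp [set, Set.Iic_inter_Iic]⟩
  · exact ⟨⟨max a b, some true⟩, rfl, by simp [set, Set.Ici_inter_Ici]⟩

lemma germ_shift (a : Atom) (n : ℕ) : (a.shift n).germ = a.germ := by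
  rcases a with ⟨a, _ | _ | _⟩ <;> rfl

lemma shift_subset (a : Atom) (n : ℕ) : (a.shift n).set ⊆ a.set := by
  rcases a with ⟨a, _ | _ | _⟩ <;> simp [shift, set, Set.subset_def] <;> omega

lemma eventually_shift_subset_or_disjoint (a b : Atom) :
    (∀ᶠ n in atTop, (a.shift n).set ⊆ b.set) ∨ ∀ᶠ n in atTop, Disjoint (a.shift n).set b.set := by
  rcases a with ⟨a, _ | _ | _⟩
  · by_cases h : a ∈ b.set
    · exact .inl (.of_forall fun _ => by simpa [shift, set] using h)
    · exact .inr (.of_forall fun _ => by simpa [shift, set] using h)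
  all_goals
    rcases b with ⟨b, _ | _ | _⟩ <;>
    first
    | exact .inl (eventually_atTop.2 ⟨(a - b).natAbs + (b - a).natAbs, fun n hn => by
        simp [shift, set, Set.subset_def]; omega⟩)
    | exact .inr (eventually_atTop.2 ⟨(a - b).natAbs + (b - a).natAbs + 1, fun n hn => by
        simp [shift, set, Set.disjoint_left]; omega⟩)

lemma finite_set_inter_of_germ_ne {a b : Atom} (h : a.germ ≠ b.germ) :
    (a.set ∩ b.set).Finite := by
  rcases a with ⟨a, _ | _ | _⟩
  · exact (Set.finite_singleton a).subset Set.inter_subset_left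
  all_goals rcases b with ⟨b, _ | _ | _⟩
  all_goals first
    | exact (Set.finite_singleton b).subset Set.inter_subset_right
    | exact absurd rfl h
    | exact (Set.finite_Icc (min a b) (max a b)).subset fun z hz =>
        Set.mem_Icc.2 (by simp only [set, Set.mem_inter_iff, Set.mem_Ici, Set.mem_Iic] at hz; omega)

lemma exists_finite_biUnion_eq_inter (a b : Atom) :
    ∃ s : Set Atom, s.Finite ∧ ⋃ c ∈ s, c.set = a.set ∩ b.set := by
  by_cases h : a.germ = b.germ
  · obtain ⟨c, -, hc⟩ := exists_set_eq_inter_of_germ_eq h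
    exact ⟨{c}, Set.finite_singleton c, by simpa using hc⟩
  · refine ⟨(⟨·, none⟩) '' (a.set ∩ b.set), (finite_set_inter_of_germ_ne h).image _, ?_⟩
    rw [Set.biUnion_image]
    exact Set.biUnion_of_singleton _

end Atom

abbrev CoordOrthant (N : ℕ) := Fin N → Atom

namespace CoordOrthant

variable {N : ℕ}

def set (o : CoordOrthant N) : Set (Fin N → ℤ) := Set.univ.pi fun i => (o i).set

def rays (o : CoordOrthant N) : Finset (Fin N) := {i | (o i).dir.isSome}

def rank (o : CoordOrthant N) : ℕ := o.rays.card

def germ (o : CoordOrthant N) : Fin N → ℤ ⊕ Bool := fun i => (o i).germ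

def ofGerm (c : Fin N → ℤ ⊕ Bool) : CoordOrthant N := fun i => Atom.ofGerm (c i)

def shift (o : CoordOrthant N) (n : ℕ) : CoordOrthant N := fun i => (o i).shift n

lemma base_mem_set (o : CoordOrthant N) : (fun i => (o i).base) ∈ o.set :=
  fun i _ => (o i).base_mem_set

lemma set_subset_set_iff {o o' : CoordOrthant N} :
    o.set ⊆ o'.set ↔ ∀ i, (o i).set ⊆ (o' i).set := by
  rw [set, set, Set.univ_pi_subset_univ_pi_iff, or_iff_left]
  rintro ⟨i, hi⟩
  exact Set.eq_empty_iff_forall_notMem.1 hi _ (o i).base_mem_set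

lemma rays_subset_of_subset {o o' : CoordOrthant N} (h : o.set ⊆ o'.set) : o.rays ⊆ o'.rays := by
  intro i hi
  simp only [rays, Finset.mem_filter, Finset.mem_univ, true_and] at hi ⊢
  rwa [← Atom.dir_eq_of_set_subset (set_subset_set_iff.1 h i) hi]

lemma rank_le_of_subset {o o' : CoordOrthant N} (h : o.set ⊆ o'.set) : o.rank ≤ o'.rank :=
  Finset.card_le_card (rays_subset_of_subset h)

lemma germ_eq_of_subset_of_rank_le {o o' : CoordOrthant N} (h : o.set ⊆ o'.set)
    (hr : o'.rank ≤ o.rank) : o.germ = o'.germ := by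
  have hrays := Finset.eq_of_subset_of_card_le (rays_subset_of_subset h) hr
  funext i
  refine Atom.germ_eq_of_set_subset (set_subset_set_iff.1 h i) ?_
  have := congrArg (i ∈ ·) hrays
  simpa [rays] using this

lemma rank_eq_of_germ_eq {o o' : CoordOrthant N} (h : o.germ = o'.germ) : o.rank = o'.rank := by
  have : o.rays = o'.rays := by
    ext i
    simp [rays, Atom.isSome_dir_eq_of_germ_eq (congrFun h i)]
  rw [rank, rank, this]

lemma germ_ofGerm (c : Fin N → ℤ ⊕ Bool) : (ofGerm c).germ = c :=
  funext fun i => Atom.germ_ofGerm (c i)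

lemma germ_shift (o : CoordOrthant N) (n : ℕ) : (o.shift n).germ = o.germ :=
  funext fun i => (o i).germ_shift n

lemma shift_subset (o : CoordOrthant N) (n : ℕ) : (o.shift n).set ⊆ o.set :=
  set_subset_set_iff.2 fun i => (o i).shift_subset n

lemma exists_set_eq_inter_of_germ_eq {o o' : CoordOrthant N} (h : o.germ = o'.germ) :
    ∃ o'' : CoordOrthant N, o''.germ = o.germ ∧ o''.set = o.set ∩ o'.set := by
  choose c hc using fun i => Atom.exists_set_eq_inter_of_germ_eq (congrFun h i)
  exact ⟨c, funext fun i => (hc i).1, by simp only [set, (hc _).2, Set.pi_inter_distrib]⟩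

lemma eventually_shift_subset_or_disjoint (o q : CoordOrthant N) :
    (∀ᶠ n in atTop, (o.shift n).set ⊆ q.set) ∨
      ∀ᶠ n in atTop, Disjoint (o.shift n).set q.set := by
  by_cases h : ∀ i, ∀ᶠ n in atTop, ((o i).shift n).set ⊆ (q i).set
  · exact .inl ((eventually_all.2 h).mono fun n hn => set_subset_set_iff.2 hn)
  · obtain ⟨i, hi⟩ := not_forall.1 h
    refine .inr (((o i).eventually_shift_subset_or_disjoint (q i)).resolve_left hi |>.mono
      fun n hn => Set.disjoint_univ_pi.2 ⟨i, hn⟩)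

lemma eventually_shift_subset_or_disjoint_biUnion (o : CoordOrthant N)
    {𝓞 : Set (CoordOrthant N)} (h𝓞 : 𝓞.Finite) :
    (∃ q ∈ 𝓞, ∀ᶠ n in atTop, (o.shift n).set ⊆ q.set) ∨
      ∀ᶠ n in atTop, Disjoint (o.shift n).set (⋃ q ∈ 𝓞, q.set) := by
  by_cases h : ∃ q ∈ 𝓞, ∀ᶠ n in atTop, (o.shift n).set ⊆ q.set
  · exact .inl h
  · simp only [not_exists, not_and] at h
    refine .inr (((eventually_all_finite h𝓞).2 fun q hq =>
      (o.eventually_shift_subset_or_disjoint q).resolve_left (h q hq)).mono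
      fun n hn => Set.disjoint_iUnion₂_right.2 hn)

lemma exists_finite_biUnion_eq_inter (o o' : CoordOrthant N) :
    ∃ 𝓞 : Set (CoordOrthant N), 𝓞.Finite ∧ ⋃ q ∈ 𝓞, q.set = o.set ∩ o'.set := by
  choose s hs hs' using fun i => Atom.exists_finite_biUnion_eq_inter (o i) (o' i)
  refine ⟨Set.univ.pi s, Set.Finite.pi hs, ?_⟩
  simp only [set, Set.biUnion_univ_pi, hs', Set.pi_inter_distrib]

end CoordOrthant

section Orthants

variable {N : ℕ}

lemma IsOrthMat.sum_mul_row {A : Matrix (Fin N) (Fin N) ℤ} (hA : IsOrthMat A) (i i' : Fin N) :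
    ∑ j, A i j * A i' j = if i = i' then 1 else 0 := by
  simpa [Matrix.mul_apply, Matrix.one_apply] using congrFun (congrFun hA i) i'

lemma exists_eq_sign_of_sum_mul_self_eq_one {f : Fin N → ℤ} (hf : ∑ j, f j * f j = 1) :
    ∃ j₀, (f j₀ = 1 ∨ f j₀ = -1) ∧ ∀ j ≠ j₀, f j = 0 := by
  obtain ⟨j₀, hj₀⟩ : ∃ j₀, f j₀ ≠ 0 := by
    by_contra! h
    simp [h] at hf
  have hsplit := Finset.add_sum_erase Finset.univ (fun j => f j * f j) (Finset.mem_univ j₀)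
  have hpos : 0 < f j₀ * f j₀ := mul_self_pos.2 hj₀
  have hrest : 0 ≤ ∑ j ∈ Finset.univ.erase j₀, f j * f j :=
    Finset.sum_nonneg fun j _ => mul_self_nonneg _
  have hzero := (Finset.sum_eq_zero_iff_of_nonneg fun j _ => mul_self_nonneg (f j)).1
    (show ∑ j ∈ Finset.univ.erase j₀, f j * f j = 0 by omega)
  refine ⟨j₀, mul_self_eq_one_iff.1 (by omega), fun j hj => ?_⟩
  exact mul_self_eq_zero.1 (hzero j (Finset.mem_erase.2 ⟨hj, Finset.mem_univ j⟩))

lemma IsOrthMat.exists_signedPerm {A : Matrix (Fin N) (Fin N) ℤ} (hA : IsOrthMat A) :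
    ∃ (c : Fin N ≃ Fin N) (ε : Fin N → ℤ),
      (∀ i, ε i = 1 ∨ ε i = -1) ∧ ∀ v i, A.mulVec v i = ε i * v (c i) := by
  choose c hc hc' using fun i =>
    exists_eq_sign_of_sum_mul_self_eq_one (by simpa using hA.sum_mul_row i i)
  have hne : ∀ i, A i (c i) ≠ 0 := fun i => by rcases hc i with h | h <;> simp [h]
  have hinj : Function.Injective c := by
    intro i i' hii
    by_contra hne'
    have h0 := hA.sum_mul_row i i'
    rw [if_neg hne', Finset.sum_eq_single (c i) (fun j _ hj => by rw [hc' i j hj, zero_mul])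
      (by simp)] at h0
    exact mul_ne_zero (hne i) (hii ▸ hne i') h0
  refine ⟨Equiv.ofBijective c hinj.bijective_of_finite, fun i => A i (c i), hc, fun v i => ?_⟩
  simp only [Matrix.mulVec, dotProduct, Equiv.ofBijective_apply]
  exact Finset.sum_eq_single (c i) (fun j _ hj => by rw [hc' i j hj, zero_mul]) (by simp)

lemma image_stdFace_eq_set (a : Fin N → ℤ) {A : Matrix (Fin N) (Fin N) ℤ} (c : Fin N ≃ Fin N)
    {ε : Fin N → ℤ} (hε : ∀ i, ε i = 1 ∨ ε i = -1) (hA : ∀ v i, A.mulVec v i = ε i * v (c i))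
    (Y : Finset (Fin N)) :
    (fun v => a + A.mulVec v) '' stdFace N Y =
      CoordOrthant.set fun i => ⟨a i, if c i ∈ Y then some (decide (ε i = 1)) else none⟩ := by
  ext x
  simp only [Set.mem_image, CoordOrthant.set, Set.mem_univ_pi]
  constructor
  · rintro ⟨v, ⟨hv, hvY⟩, rfl⟩ i
    have := hv (c i)
    by_cases hY : c i ∈ Y <;> rcases hε i with h | h <;>
      simp [Atom.set, hA, hY, h, hvY (c i)] <;> omega
  · intro hx
    refine ⟨fun j => ε (c.symm j) * (x (c.symm j) - a (c.symm j)), ⟨fun j => ?_, fun j hj => ?_⟩,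
      funext fun i => ?_⟩
    · have := hx (c.symm j)
      by_cases hY : c (c.symm j) ∈ Y <;> rcases hε (c.symm j) with h | h <;>
        simp_all [Atom.set]
    · have := hx (c.symm j)
      simp_all [Atom.set]
    · have := hε i
      simp only [Pi.add_apply, hA, Equiv.symm_apply_apply]
      rcases this with h | h <;> simp [h]

lemma isOrthantOfRank_iff {L : Set (Fin N → ℤ)} {r : ℕ} :
    IsOrthantOfRank L r ↔ ∃ o : CoordOrthant N, o.rank = r ∧ o.set = L := by
  constructor
  · rintro ⟨a, A, Y, hA, rfl, rfl⟩
    obtain ⟨c, ε, hε, hAε⟩ := hA.exists_signedPerm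
    refine ⟨_, ?_, (image_stdFace_eq_set a c hε hAε Y).symm⟩
    rw [CoordOrthant.rank, ← Finset.card_map c.toEmbedding]
    congr 1
    ext j
    simp only [CoordOrthant.rays, Finset.mem_map_equiv, Finset.mem_filter, Finset.mem_univ,
      true_and, Equiv.apply_symm_apply]
    split_ifs <;> simp_all
  · rintro ⟨o, rfl, rfl⟩
    set ε : Fin N → ℤ := fun i => if (o i).dir = some false then -1 else 1
    have hε : ∀ i, ε i = 1 ∨ ε i = -1 := fun i => by
      by_cases h : (o i).dir = some false <;> simp [ε, h]
    refine ⟨fun i => (o i).base, Matrix.diagonal ε, o.rays, ?_, rfl, ?_⟩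
    · rw [IsOrthMat, Matrix.diagonal_transpose, Matrix.diagonal_mul_diagonal, ← Matrix.diagonal_one]
      congr 1
      funext i
      rcases hε i with h | h <;> simp [h]
    · rw [image_stdFace_eq_set _ (Equiv.refl _) hε (fun v i => Matrix.mulVec_diagonal _ _ _)]
      congr 1
      funext i
      rcases hoi : o i with ⟨b, _ | _ | _⟩ <;> simp [CoordOrthant.rays, ε, hoi]

lemma IsOrthantOfRank.isOrthant {L : Set (Fin N → ℤ)} {r : ℕ} (h : IsOrthantOfRank L r) :
    IsOrthant L :=
  ⟨r, h⟩

lemma bddAbove_orthantRanks (X : Set (Fin N → ℤ)) :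
    BddAbove {k | ∃ L, IsOrthantOfRank L k ∧ L ⊆ X} := by
  refine ⟨N, fun r ⟨L, ⟨a, A, Y, hA, hY, hL⟩, _⟩ => ?_⟩
  simpa [← hY] using Finset.card_le_univ Y

lemma orthRank_set (o : CoordOrthant N) : orthRank o.set = o.rank := by
  refine le_antisymm (csSup_le' ?_) (le_csSup (bddAbove_orthantRanks _)
    ⟨o.set, isOrthantOfRank_iff.2 ⟨o, rfl, rfl⟩, subset_rfl⟩)
  rintro r ⟨L, hL, hLo⟩
  obtain ⟨o', rfl, rfl⟩ := isOrthantOfRank_iff.1 hL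
  exact CoordOrthant.rank_le_of_subset hLo

lemma orthRank_mono {X Y : Set (Fin N → ℤ)} (h : X ⊆ Y) : orthRank X ≤ orthRank Y :=
  csSup_le_csSup' (bddAbove_orthantRanks Y) fun _ ⟨L, hL, hLX⟩ => ⟨L, hL, hLX.trans h⟩

lemma isOrthantOfRank_singleton (x : Fin N → ℤ) : IsOrthantOfRank {x} 0 :=
  isOrthantOfRank_iff.2 ⟨fun i => ⟨x i, none⟩, by simp [CoordOrthant.rank, CoordOrthant.rays],
    by simpa [CoordOrthant.set, Atom.set] using Set.univ_pi_singleton x⟩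

lemma commensurable_set_iff {o o' : CoordOrthant N} (h : o.rank = o'.rank) :
    Commensurable o.set o'.set ↔ o.germ = o'.germ := by
  constructor
  · rintro ⟨⟨x, hx⟩, ho, ho'⟩
    rw [orthRank_set] at ho ho'
    obtain ⟨M, hM, hMsub⟩ : o.rank ∈ {k | ∃ L, IsOrthantOfRank L k ∧ L ⊆ o.set ∩ o'.set} :=
      ho ▸ Nat.sSup_mem ⟨0, {x}, isOrthantOfRank_singleton x, Set.singleton_subset_iff.2 hx⟩
        (bddAbove_orthantRanks _)
    obtain ⟨m, hm, rfl⟩ := isOrthantOfRank_iff.1 hM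
    rw [← CoordOrthant.germ_eq_of_subset_of_rank_le (hMsub.trans Set.inter_subset_left) hm.ge,
      CoordOrthant.germ_eq_of_subset_of_rank_le (hMsub.trans Set.inter_subset_right) (h ▸ hm.ge)]
  · intro hg
    obtain ⟨o'', hg'', hset⟩ := CoordOrthant.exists_set_eq_inter_of_germ_eq hg
    refine ⟨hset ▸ ⟨_, o''.base_mem_set⟩, ?_, ?_⟩ <;>
      rw [← hset, orthRank_set, orthRank_set, CoordOrthant.rank_eq_of_germ_eq hg'', h]

lemma Commensurable.symm {L L' : Set (Fin N → ℤ)} (h : Commensurable L L') :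
    Commensurable L' L := by
  obtain ⟨h₁, h₂, h₃⟩ := h
  rw [Set.inter_comm] at h₁ h₂ h₃
  exact ⟨h₁, h₃, h₂⟩

lemma IsometricOn.mono {f : (Fin N → ℤ) → (Fin N → ℤ)} {L L' : Set (Fin N → ℤ)}
    (hf : IsometricOn f L) (h : L' ⊆ L) : IsometricOn f L' :=
  let ⟨a, A, hA, hfL⟩ := hf
  ⟨a, A, hA, fun x hx => hfL x (h hx)⟩

lemma isometricOn_of_eqOn_id {f : (Fin N → ℤ) → (Fin N → ℤ)} {L : Set (Fin N → ℤ)}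
    (h : ∀ x ∈ L, f x = x) : IsometricOn f L :=
  ⟨0, 1, by simp [IsOrthMat], fun x hx => by simp [h x hx]⟩

lemma IsOrthMat.mul {A B : Matrix (Fin N) (Fin N) ℤ} (hA : IsOrthMat A) (hB : IsOrthMat B) :
    IsOrthMat (A * B) := by
  rw [IsOrthMat, Matrix.transpose_mul, Matrix.mul_assoc, ← Matrix.mul_assoc B, hB,
    Matrix.one_mul, hA]

lemma IsOrthMat.transpose_mul_self {A : Matrix (Fin N) (Fin N) ℤ} (hA : IsOrthMat A) :
    A.transpose * A = 1 :=
  mul_eq_one_comm.1 hA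

lemma IsometricOn.isOrthantOfRank_image {f : (Fin N → ℤ) → (Fin N → ℤ)} {L : Set (Fin N → ℤ)}
    {r : ℕ} (hf : IsometricOn f L) (hL : IsOrthantOfRank L r) : IsOrthantOfRank (f '' L) r := by
  obtain ⟨a, A, hA, hfL⟩ := hf
  obtain ⟨a₀, A₀, Y, hA₀, hY, rfl⟩ := hL
  refine ⟨a + A.mulVec a₀, A * A₀, Y, hA.mul hA₀, hY, ?_⟩
  rw [Set.image_congr hfL, ← Set.image_comp]
  refine Set.image_congr fun v _ => ?_
  simp only [Function.comp_apply, Matrix.mulVec_add, Matrix.mulVec_mulVec]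
  abel

lemma IsometricOn.symm_image {g : Equiv.Perm (Fin N → ℤ)} {L : Set (Fin N → ℤ)}
    (hg : IsometricOn g L) : IsometricOn g.symm (g '' L) := by
  obtain ⟨a, A, hA, hgL⟩ := hg
  refine ⟨-A.transpose.mulVec a, A.transpose, ?_, ?_⟩
  · rw [IsOrthMat, Matrix.transpose_transpose, hA.transpose_mul_self]
  · rintro _ ⟨x, hx, rfl⟩
    rw [Equiv.symm_apply_apply, hgL x hx, Matrix.mulVec_add, Matrix.mulVec_mulVec,
      hA.transpose_mul_self, Matrix.one_mulVec]
    abel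

lemma IsometricOn.exists_image_eq {f : (Fin N → ℤ) → (Fin N → ℤ)} {o : CoordOrthant N}
    (hf : IsometricOn f o.set) : ∃ q : CoordOrthant N, q.rank = o.rank ∧ q.set = f '' o.set :=
  isOrthantOfRank_iff.1 (hf.isOrthantOfRank_image (isOrthantOfRank_iff.2 ⟨o, rfl, rfl⟩))

lemma exists_coordOrthants_of_finite {𝓛 : Set (Set (Fin N → ℤ))} (h𝓛 : 𝓛.Finite)
    (horth : ∀ L ∈ 𝓛, IsOrthant L) :
    ∃ 𝓞 : Set (CoordOrthant N), 𝓞.Finite ∧ (∀ q ∈ 𝓞, q.set ∈ 𝓛) ∧ ⋃₀ 𝓛 = ⋃ q ∈ 𝓞, q.set := by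
  have hinv : ∀ L ∈ 𝓛, (Function.invFun CoordOrthant.set L).set = L := fun L hL =>
    Function.invFun_eq <| let ⟨_, hr⟩ := horth L hL; let ⟨o, _, ho⟩ := isOrthantOfRank_iff.1 hr
      ⟨o, ho⟩
  refine ⟨Function.invFun CoordOrthant.set '' 𝓛, h𝓛.image _, ?_, ?_⟩
  · rintro _ ⟨L, hL, rfl⟩
    rwa [hinv L hL]
  · rw [Set.biUnion_image, Set.sUnion_eq_biUnion]
    exact Set.iUnion₂_congr fun L hL => (hinv L hL).symm

lemma IsOrthohedral.exists_coordOrthants {X : Set (Fin N → ℤ)} (hX : IsOrthohedral X) :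
    ∃ 𝓞 : Set (CoordOrthant N), 𝓞.Finite ∧ X = ⋃ q ∈ 𝓞, q.set := by
  obtain ⟨𝓛, h𝓛, horth, rfl⟩ := hX
  obtain ⟨𝓞, h𝓞, -, h⟩ := exists_coordOrthants_of_finite h𝓛 horth
  exact ⟨𝓞, h𝓞, h⟩

lemma IsOrthohedral.inter {X Y : Set (Fin N → ℤ)} (hX : IsOrthohedral X) (hY : IsOrthohedral Y) :
    IsOrthohedral (X ∩ Y) := by
  obtain ⟨𝓞X, h𝓞X, rfl⟩ := hX.exists_coordOrthants
  obtain ⟨𝓞Y, h𝓞Y, rfl⟩ := hY.exists_coordOrthants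
  choose 𝓘 h𝓘 h𝓘' using CoordOrthant.exists_finite_biUnion_eq_inter (N := N)
  refine ⟨⋃ p ∈ 𝓞X ×ˢ 𝓞Y, CoordOrthant.set '' 𝓘 p.1 p.2,
    (h𝓞X.prod h𝓞Y).biUnion fun p _ => (h𝓘 _ _).image _, ?_, ?_⟩
  · simp only [Set.mem_iUnion, Set.mem_image]
    rintro _ ⟨p, -, q, -, rfl⟩
    exact ⟨q.rank, isOrthantOfRank_iff.2 ⟨q, rfl, rfl⟩⟩
  · ext x
    simp only [Set.mem_inter_iff, Set.mem_iUnion, Set.mem_sUnion, Set.mem_image, Set.mem_prod,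
      exists_prop, Prod.exists]
    constructor
    · rintro ⟨⟨q, hq, hxq⟩, ⟨q', hq', hxq'⟩⟩
      have hx : x ∈ ⋃ r ∈ 𝓘 q q', r.set := by rw [h𝓘']; exact ⟨hxq, hxq'⟩
      obtain ⟨r, hr, hxr⟩ := Set.mem_iUnion₂.1 hx
      exact ⟨_, ⟨q, q', ⟨hq, hq'⟩, r, hr, rfl⟩, hxr⟩
    · rintro ⟨_, ⟨q, q', ⟨hq, hq'⟩, r, hr, rfl⟩, hxr⟩
      have hx : x ∈ q.set ∩ q'.set := by rw [← h𝓘']; exact Set.mem_biUnion hr hxr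
      exact ⟨⟨q, hq, hx.1⟩, ⟨q', hq', hx.2⟩⟩

end Orthants

section Germs

variable {N : ℕ}

/-- The rank-`j` germs of `X`, as germ codes (see `heightAt_eq_ncard_germsIn`). -/
def germsIn (j : ℕ) (X : Set (Fin N → ℤ)) : Set (Fin N → ℤ ⊕ Bool) :=
  {c | ∃ o : CoordOrthant N, o.rank = j ∧ o.set ⊆ X ∧ o.germ = c}

noncomputable def setGerm (L : Set (Fin N → ℤ)) : Fin N → ℤ ⊕ Bool :=
  (Function.invFun CoordOrthant.set L).germ

lemma setGerm_set (o : CoordOrthant N) : setGerm o.set = o.germ := by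
  have h : (Function.invFun CoordOrthant.set o.set).set = o.set := Function.invFun_eq ⟨o, rfl⟩
  exact CoordOrthant.germ_eq_of_subset_of_rank_le h.le (CoordOrthant.rank_le_of_subset h.ge)

lemma setGerm_mem_germsIn {X L : Set (Fin N → ℤ)} {j : ℕ} (hL : L ∈ germSet X j) :
    setGerm L ∈ germsIn j X := by
  obtain ⟨o, ho, rfl⟩ := isOrthantOfRank_iff.1 hL.1
  exact ⟨o, ho, hL.2, (setGerm_set o).symm⟩

lemma setGerm_eq_setGerm_iff {L L' : Set (Fin N → ℤ)} {j : ℕ} (hL : IsOrthantOfRank L j)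
    (hL' : IsOrthantOfRank L' j) : setGerm L = setGerm L' ↔ Commensurable L L' := by
  obtain ⟨o, ho, rfl⟩ := isOrthantOfRank_iff.1 hL
  obtain ⟨o', ho', rfl⟩ := isOrthantOfRank_iff.1 hL'
  rw [setGerm_set, setGerm_set, commensurable_set_iff (ho.trans ho'.symm)]

lemma heightAt_eq_ncard_germsIn (X : Set (Fin N → ℤ)) (j : ℕ) :
    heightAt X j = (germsIn j X).ncard := by
  rw [heightAt, ← Nat.card_coe_set_eq]
  refine Nat.card_eq_of_bijective
    (Quot.lift (fun L => ⟨setGerm L.1, setGerm_mem_germsIn L.2⟩) fun L L' h =>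
      Subtype.ext ((setGerm_eq_setGerm_iff L.2.1 L'.2.1).2 h)) ⟨?_, ?_⟩
  · rintro ⟨L⟩ ⟨L'⟩ h
    exact Quot.sound ((setGerm_eq_setGerm_iff L.2.1 L'.2.1).1 (congrArg Subtype.val h))
  · rintro ⟨_, o, ho, hoX, rfl⟩
    exact ⟨Quot.mk _ ⟨o.set, isOrthantOfRank_iff.2 ⟨o, ho, rfl⟩, hoX⟩,
      Subtype.ext (setGerm_set o)⟩

lemma germsIn_mono {X Y : Set (Fin N → ℤ)} (h : X ⊆ Y) (j : ℕ) : germsIn j X ⊆ germsIn j Y :=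
  fun _ ⟨o, ho, hoX, hc⟩ => ⟨o, ho, hoX.trans h, hc⟩

lemma germ_mem_germsIn_of_shift_subset {o : CoordOrthant N} {n : ℕ} {X : Set (Fin N → ℤ)}
    (h : (o.shift n).set ⊆ X) : o.germ ∈ germsIn o.rank X :=
  ⟨o.shift n, CoordOrthant.rank_eq_of_germ_eq (o.germ_shift n), h, o.germ_shift n⟩

lemma disjoint_germsIn {X Y : Set (Fin N → ℤ)} (h : Disjoint X Y) (j : ℕ) :
    Disjoint (germsIn j X) (germsIn j Y) := by
  refine Set.disjoint_left.2 ?_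
  rintro _ ⟨o, -, hoX, rfl⟩ ⟨o', -, ho'Y, hg⟩
  obtain ⟨o'', -, hset⟩ := CoordOrthant.exists_set_eq_inter_of_germ_eq hg.symm
  have hx := hset ▸ o''.base_mem_set
  exact Set.disjoint_left.1 h (hoX hx.1) (ho'Y hx.2)

lemma germsIn_sdiff {L : Set (Fin N → ℤ)} (hL : IsOrthant L) (X : Set (Fin N → ℤ)) (j : ℕ) :
    germsIn j (X \ L) = germsIn j X \ germsIn j L := by
  refine Set.Subset.antisymm (fun c hc => ⟨germsIn_mono Set.sdiff_subset j hc,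
    Set.disjoint_left.1 (disjoint_germsIn Set.disjoint_sdiff_left j) hc⟩) ?_
  obtain ⟨r, hr⟩ := hL
  obtain ⟨q, -, rfl⟩ := isOrthantOfRank_iff.1 hr
  rintro _ ⟨⟨o, rfl, hoX, rfl⟩, hnot⟩
  rcases o.eventually_shift_subset_or_disjoint q with h | h
  · exact absurd (germ_mem_germsIn_of_shift_subset h.exists.choose_spec) hnot
  · obtain ⟨n, hn⟩ := h.exists
    exact germ_mem_germsIn_of_shift_subset (n := n)
      (Set.subset_sdiff.2 ⟨(o.shift_subset n).trans hoX, hn⟩)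

lemma heightAt_sdiff {L : Set (Fin N → ℤ)} (hL : IsOrthant L) (X : Set (Fin N → ℤ)) (j : ℕ) :
    heightAt (X \ L) j = (germsIn j X \ germsIn j L).ncard := by
  rw [heightAt_eq_ncard_germsIn, germsIn_sdiff hL]

lemma germsIn_sdiff_subset {L L' X : Set (Fin N → ℤ)} (hL' : IsOrthant L') (h : L \ L' ⊆ X)
    (j : ℕ) : germsIn j L \ germsIn j L' ⊆ germsIn j X :=
  germsIn_sdiff hL' L j ▸ germsIn_mono h j

lemma germsIn_subset_biUnion {X : Set (Fin N → ℤ)} {𝓞 : Set (CoordOrthant N)} (h𝓞 : 𝓞.Finite)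
    (hX : X ⊆ ⋃ q ∈ 𝓞, q.set) (j : ℕ) : germsIn j X ⊆ ⋃ q ∈ 𝓞, germsIn j q.set := by
  rintro _ ⟨o, rfl, hoX, rfl⟩
  rcases o.eventually_shift_subset_or_disjoint_biUnion h𝓞 with ⟨q, hq, h⟩ | h
  · exact Set.mem_biUnion hq (germ_mem_germsIn_of_shift_subset h.exists.choose_spec)
  · obtain ⟨n, hn⟩ := h.exists
    have hx := (o.shift n).base_mem_set
    exact absurd (hX (hoX (o.shift_subset n hx))) (Set.disjoint_left.1 hn hx)

lemma germsIn_set_subset_of_rank_le {o : CoordOrthant N} {j : ℕ} (h : o.rank ≤ j) :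
    germsIn j o.set ⊆ {o.germ} := by
  rintro _ ⟨M, rfl, hM, rfl⟩
  exact CoordOrthant.germ_eq_of_subset_of_rank_le hM h

lemma exists_germ_eq_update_of_subset {M o : CoordOrthant N} (h : M.set ⊆ o.set)
    (hr : o.rank = M.rank + 1) :
    ∃ e, (o e).dir.isSome ∧ (M e).base ∈ (o e).set ∧
      M.germ = Function.update o.germ e (.inl (M e).base) := by
  have hsub : ∀ i ∈ M.rays, i ∈ o.rays := CoordOrthant.rays_subset_of_subset h
  obtain ⟨e, he⟩ : ∃ e, o.rays \ M.rays = {e} := Finset.card_eq_one.1 (by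
    rw [Finset.card_sdiff_of_subset hsub]; unfold CoordOrthant.rank at hr; omega)
  have hmem : ∀ i, i ∈ o.rays ∧ i ∉ M.rays ↔ i = e := fun i => by
    rw [← Finset.mem_sdiff, he, Finset.mem_singleton]
  have he' := (hmem e).2 rfl
  simp only [CoordOrthant.rays, Finset.mem_filter, Finset.mem_univ, true_and] at hmem he' hsub
  refine ⟨e, he'.1, CoordOrthant.set_subset_set_iff.1 h e (M e).base_mem_set, funext fun i => ?_⟩
  by_cases hi : i = e
  · subst hi
    simpa [CoordOrthant.germ] using
      Atom.germ_eq_inl_of_dir_eq_none (Option.not_isSome_iff_eq_none.1 he'.2)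
  · rw [Function.update_of_ne hi]
    refine Atom.germ_eq_of_set_subset (CoordOrthant.set_subset_set_iff.1 h i) ?_
    exact Bool.eq_iff_iff.2 ⟨hsub i, fun ho => not_not.1 fun hM => mt (hmem i).1 hi ⟨ho, hM⟩⟩

lemma update_mem_germsIn {o : CoordOrthant N} {e : Fin N} (he : (o e).dir.isSome) {ℓ : ℤ}
    (hℓ : ℓ ∈ (o e).set) : Function.update o.germ e (.inl ℓ) ∈ germsIn (o.rank - 1) o.set := by
  refine ⟨Function.update o e ⟨ℓ, none⟩, ?_, CoordOrthant.set_subset_set_iff.2 fun i => ?_,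
    funext fun i => ?_⟩
  · have : CoordOrthant.rays (Function.update o e ⟨ℓ, none⟩) = o.rays.erase e := by
      ext i
      by_cases hi : i = e <;> simp [CoordOrthant.rays, hi]
    rw [CoordOrthant.rank, this, Finset.card_erase_of_mem (by simpa [CoordOrthant.rays]),
      CoordOrthant.rank]
  · by_cases hi : i = e
    · subst hi
      simpa [Atom.set] using hℓ
    · simp [Function.update_of_ne hi]
  · by_cases hi : i = e
    · subst hi
      simp [CoordOrthant.germ, Atom.germ]
    · simp [CoordOrthant.germ, Function.update_of_ne hi]

/-- The rank-`j` germs of `L` missing from `L'` are slices of `L` across the finite difference of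
two parallel rays of `L` and `L'`. -/
lemma finite_germsIn_sdiff_of_commensurable {L L' : Set (Fin N → ℤ)} {j : ℕ}
    (hL : IsOrthantOfRank L (j + 1)) (hL' : IsOrthantOfRank L' (j + 1))
    (h : Commensurable L L') : (germsIn j L \ germsIn j L').Finite := by
  obtain ⟨o₁, h₁, rfl⟩ := isOrthantOfRank_iff.1 hL
  obtain ⟨o₂, h₂, rfl⟩ := isOrthantOfRank_iff.1 hL'
  have h := (commensurable_set_iff (h₁.trans h₂.symm)).1 h
  refine (Set.finite_iUnion fun e => (Atom.finite_set_sdiff_of_germ_eq (congrFun h e)).image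
    fun ℓ => Function.update o₁.germ e (.inl ℓ)).subset ?_
  rintro _ ⟨⟨M, rfl, hMo, rfl⟩, hnot⟩
  obtain ⟨e, he, hmem, hgerm⟩ := exists_germ_eq_update_of_subset hMo h₁
  refine Set.mem_iUnion.2 ⟨e, _, ⟨hmem, fun hℓ => hnot ?_⟩, hgerm.symm⟩
  have he₂ : (o₂ e).dir.isSome := Atom.isSome_dir_eq_of_germ_eq (congrFun h e) ▸ he
  have := update_mem_germsIn he₂ hℓ
  rwa [← h, h₂, Nat.add_sub_cancel, ← hgerm] at this

/-- Cover `X` by finitely many orthants: those of rank `≤ j` carry at most one rank-`j` germ, and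
those of rank `j + 1` are commensurable with some `L ∈ Λ`. -/
lemma finite_germsIn_sdiff_biUnion {X : Set (Fin N → ℤ)} {j : ℕ} (hX : IsOrthohedral X)
    (hXrk : orthRank X ≤ j + 1) {Λ : Finset (Set (Fin N → ℤ))}
    (hΛ : ∀ L ∈ Λ, IsOrthantOfRank L (j + 1))
    (hrep : ∀ L', IsOrthantOfRank L' (j + 1) → L' ⊆ X → ∃ L ∈ Λ, Commensurable L L') :
    (germsIn j X \ ⋃ L ∈ Λ, germsIn j L).Finite := by
  obtain ⟨𝓞, h𝓞, hcov⟩ := hX.exists_coordOrthants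
  refine (h𝓞.biUnion (t := fun q => germsIn j q.set \ ⋃ L ∈ Λ, germsIn j L)
    fun q hq => ?_).subset ?_
  · have hqX : q.set ⊆ X := hcov ▸ Set.subset_biUnion_of_mem (u := CoordOrthant.set) hq
    have hq' : IsOrthantOfRank q.set q.rank := isOrthantOfRank_iff.2 ⟨q, rfl, rfl⟩
    have hrk : q.rank ≤ j + 1 := (le_csSup (bddAbove_orthantRanks X) ⟨_, hq', hqX⟩).trans hXrk
    rcases hrk.lt_or_eq with h | h
    · exact (Set.finite_singleton _).subset
        (Set.sdiff_subset.trans (germsIn_set_subset_of_rank_le (Nat.lt_succ_iff.1 h)))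
    · obtain ⟨L, hL, hcomm⟩ := hrep q.set (h ▸ hq') hqX
      exact (finite_germsIn_sdiff_of_commensurable (h ▸ hq') (hΛ L hL) hcomm.symm).subset
        (Set.sdiff_subset_sdiff_right (Set.subset_biUnion_of_mem (u := fun L => germsIn j L) hL))
  · rintro c ⟨hc, hcΛ⟩
    obtain ⟨q, hq, hcq⟩ := Set.mem_iUnion₂.1 (germsIn_subset_biUnion h𝓞 hcov.le j hc)
    exact Set.mem_biUnion hq ⟨hcq, hcΛ⟩

end Germs

section GermMap

variable {N : ℕ}

lemma IsPeiPerm.symm {S : Set (Fin N → ℤ)} {g : Equiv.Perm (Fin N → ℤ)} (hg : IsPeiPerm S g) :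
    IsPeiPerm S g.symm := by
  obtain ⟨⟨𝓛, h𝓛, horth, rfl, hdisj, hiso⟩, hoff⟩ := hg
  refine ⟨⟨(⇑g '' ·) '' 𝓛, h𝓛.image _, ?_, ?_, ?_, ?_⟩,
    fun x hx => g.symm_apply_eq.2 (hoff x hx).symm⟩
  · rintro _ ⟨L, hL, rfl⟩
    obtain ⟨r, hr⟩ := horth L hL
    exact ⟨r, (hiso L hL).isOrthantOfRank_image hr⟩
  · rw [← Set.image_sUnion]
    exact (Set.image_perm fun x hx => by_contra fun h => hx (hoff x h)).symm
  · rintro _ ⟨A, hA, rfl⟩ _ ⟨B, hB, rfl⟩ hne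
    exact (Set.disjoint_image_iff g.injective).2 (hdisj hA hB fun h => hne (h ▸ rfl))
  · rintro _ ⟨L, hL, rfl⟩
    exact (hiso L hL).symm_image

lemma IsPeiPerm.exists_isometricOn_subset {S : Set (Fin N → ℤ)} {g : Equiv.Perm (Fin N → ℤ)}
    (hg : IsPeiPerm S g) (o : CoordOrthant N) :
    ∃ o' : CoordOrthant N, o'.germ = o.germ ∧ o'.set ⊆ o.set ∧ IsometricOn g o'.set := by
  obtain ⟨⟨𝓛, h𝓛, horth, rfl, -, hiso⟩, hoff⟩ := hg
  obtain ⟨𝓞, h𝓞, h𝓞𝓛, hcov⟩ := exists_coordOrthants_of_finite h𝓛 horth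
  rcases o.eventually_shift_subset_or_disjoint_biUnion h𝓞 with ⟨q, hq, h⟩ | h
  · obtain ⟨n, hn⟩ := h.exists
    exact ⟨o.shift n, o.germ_shift n, o.shift_subset n, (hiso _ (h𝓞𝓛 q hq)).mono hn⟩
  · obtain ⟨n, hn⟩ := h.exists
    refine ⟨o.shift n, o.germ_shift n, o.shift_subset n, isometricOn_of_eqOn_id fun x hx => ?_⟩
    exact hoff x (hcov ▸ Set.disjoint_left.1 hn hx)

lemma setGerm_image_eq_of_germ_eq {f : (Fin N → ℤ) → (Fin N → ℤ)} {o₁ o₂ : CoordOrthant N}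
    (h : o₁.germ = o₂.germ) (h₁ : IsometricOn f o₁.set) (h₂ : IsometricOn f o₂.set) :
    setGerm (f '' o₁.set) = setGerm (f '' o₂.set) := by
  obtain ⟨o₃, h₃, hset⟩ := CoordOrthant.exists_set_eq_inter_of_germ_eq h
  obtain ⟨q₁, hq₁, hq₁'⟩ := h₁.exists_image_eq
  obtain ⟨q₂, hq₂, hq₂'⟩ := h₂.exists_image_eq
  obtain ⟨q₃, hq₃, hq₃'⟩ := (h₁.mono (hset ▸ Set.inter_subset_left)).exists_image_eq
  have hr₃ : o₃.rank = o₁.rank := CoordOrthant.rank_eq_of_germ_eq h₃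
  have hr₁₂ : o₁.rank = o₂.rank := CoordOrthant.rank_eq_of_germ_eq h
  have hsub : ∀ {o : CoordOrthant N}, o₃.set ⊆ o.set → ∀ {q : CoordOrthant N},
      q.set = f '' o.set → q₃.set ⊆ q.set := fun hs _ hq => hq₃' ▸ hq ▸ Set.image_mono hs
  rw [← hq₁', ← hq₂', setGerm_set, setGerm_set,
    ← CoordOrthant.germ_eq_of_subset_of_rank_le (hsub (hset ▸ Set.inter_subset_left) hq₁')
      (by omega),
    CoordOrthant.germ_eq_of_subset_of_rank_le (hsub (hset ▸ Set.inter_subset_right) hq₂')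
      (by omega)]

open Classical in
noncomputable def germMap (f : (Fin N → ℤ) → (Fin N → ℤ)) (c : Fin N → ℤ ⊕ Bool) :
    Fin N → ℤ ⊕ Bool :=
  if h : ∃ o : CoordOrthant N, o.germ = c ∧ IsometricOn f o.set then setGerm (f '' h.choose.set)
  else c

lemma germMap_germ {f : (Fin N → ℤ) → (Fin N → ℤ)} {o : CoordOrthant N}
    (hf : IsometricOn f o.set) : germMap f o.germ = setGerm (f '' o.set) := by
  have h : ∃ o' : CoordOrthant N, o'.germ = o.germ ∧ IsometricOn f o'.set := ⟨o, rfl, hf⟩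
  rw [germMap, dif_pos h]
  exact setGerm_image_eq_of_germ_eq h.choose_spec.1 h.choose_spec.2 hf

variable {S : Set (Fin N → ℤ)} {g : Equiv.Perm (Fin N → ℤ)}

lemma IsPeiPerm.germMap_symm_germMap (hg : IsPeiPerm S g) (c : Fin N → ℤ ⊕ Bool) :
    germMap g.symm (germMap g c) = c := by
  obtain ⟨o, hgerm, -, hiso⟩ := hg.exists_isometricOn_subset (CoordOrthant.ofGerm c)
  rw [CoordOrthant.germ_ofGerm] at hgerm
  subst hgerm
  obtain ⟨q, -, hq⟩ := hiso.exists_image_eq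
  rw [germMap_germ hiso, ← hq, setGerm_set, germMap_germ (hq ▸ hiso.symm_image), hq,
    g.symm_image_image, setGerm_set]

lemma IsPeiPerm.germMap_injective (hg : IsPeiPerm S g) : Function.Injective (germMap g) :=
  Function.LeftInverse.injective hg.germMap_symm_germMap

lemma IsPeiPerm.germMap_mem_germsIn (hg : IsPeiPerm S g) {j : ℕ} {X : Set (Fin N → ℤ)}
    {c : Fin N → ℤ ⊕ Bool} (hc : c ∈ germsIn j X) : germMap g c ∈ germsIn j (g '' X) := by
  obtain ⟨o, rfl, hoX, rfl⟩ := hc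
  obtain ⟨o', hgerm, ho'o, hiso⟩ := hg.exists_isometricOn_subset o
  obtain ⟨q, hq, hq'⟩ := hiso.exists_image_eq
  refine ⟨q, hq.trans (CoordOrthant.rank_eq_of_germ_eq hgerm),
    hq' ▸ Set.image_mono (ho'o.trans hoX), ?_⟩
  rw [← hgerm, germMap_germ hiso, ← hq', setGerm_set]

lemma IsPeiPerm.image_germMap_germsIn (hg : IsPeiPerm S g) (j : ℕ) (X : Set (Fin N → ℤ)) :
    germMap g '' germsIn j X = germsIn j (g '' X) := by
  refine Set.Subset.antisymm (Set.image_subset_iff.2 fun c hc => hg.germMap_mem_germsIn hc)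
    fun c hc => ⟨germMap g.symm c, ?_, ?_⟩
  · simpa using hg.symm.germMap_mem_germsIn hc
  · simpa using hg.symm.germMap_symm_germMap c

lemma IsPeiPerm.image_germMap_germsIn_sdiff (hg : IsPeiPerm S g) {X : Set (Fin N → ℤ)}
    (hX : g '' X = X) (Λ : Finset (Set (Fin N → ℤ))) (j : ℕ) :
    germMap g '' (germsIn j X \ ⋃ L ∈ Λ, germsIn j L) =
      germsIn j X \ ⋃ L ∈ Λ, germsIn j (g '' L) := by
  rw [Set.image_sdiff hg.germMap_injective, Set.image_iUnion₂, hg.image_germMap_germsIn, hX]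
  simp_rw [hg.image_germMap_germsIn]

end GermMap

section Counting

variable {α ι : Type*}

lemma finsum_indicator_one {A : Set α} (hA : A.Finite) :
    ∑ᶠ a, A.indicator (1 : α → ℤ) a = A.ncard := by
  rw [← finsum_mem_def, finsum_mem_eq_finite_toFinset_sum _ hA, Set.ncard_eq_toFinset_card A hA]
  simp

lemma hasFiniteSupport_indicator_sub_indicator {X Y : Set α} (hXY : (X \ Y).Finite)
    (hYX : (Y \ X).Finite) :
    Function.HasFiniteSupport fun a => X.indicator (1 : α → ℤ) a - Y.indicator 1 a := by
  refine (hXY.union hYX).subset fun a ha => ?_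
  by_cases hX : a ∈ X <;> by_cases hY : a ∈ Y <;> simp_all [Set.indicator]

lemma ncard_sdiff_sub_ncard_sdiff_eq_finsum {X Y : Set α} (hXY : (X \ Y).Finite)
    (hYX : (Y \ X).Finite) :
    ((X \ Y).ncard : ℤ) - (Y \ X).ncard = ∑ᶠ a, (X.indicator 1 a - Y.indicator 1 a) := by
  have h : ∀ a, X.indicator (1 : α → ℤ) a - Y.indicator 1 a =
      (X \ Y).indicator 1 a - (Y \ X).indicator 1 a := fun a => by
    by_cases ha : a ∈ X <;> by_cases hb : a ∈ Y <;> simp [Set.indicator, ha, hb]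
  rw [finsum_congr h, finsum_sub_distrib (hXY.subset (Set.support_indicator_subset))
    (hYX.subset (Set.support_indicator_subset)), finsum_indicator_one hXY,
    finsum_indicator_one hYX]

lemma sum_ncard_sdiff_sub_ncard_sdiff (Λ : Finset ι) {P Q : ι → Set α} {W : Set α}
    (hP : (Λ : Set ι).PairwiseDisjoint P) (hQ : (Λ : Set ι).PairwiseDisjoint Q)
    (hPQ : ∀ i ∈ Λ, (P i \ Q i).Finite) (hQP : ∀ i ∈ Λ, (Q i \ P i).Finite)
    (hPQW : ∀ i ∈ Λ, P i \ Q i ⊆ W) (hQPW : ∀ i ∈ Λ, Q i \ P i ⊆ W)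
    (hW : (W \ ⋃ i ∈ Λ, P i).Finite) :
    ∑ i ∈ Λ, (((P i \ Q i).ncard : ℤ) - (Q i \ P i).ncard) =
      (W \ ⋃ i ∈ Λ, Q i).ncard - (W \ ⋃ i ∈ Λ, P i).ncard := by
  have hWQ : (W \ ⋃ i ∈ Λ, Q i).Finite := by
    refine (hW.union (Λ.finite_toSet.biUnion hPQ)).subset ?_
    rintro a ⟨haW, haQ⟩
    by_cases haP : a ∈ ⋃ i ∈ Λ, P i
    · obtain ⟨i, hi, hai⟩ := Set.mem_iUnion₂.1 haP
      exact .inr (Set.mem_biUnion hi ⟨hai, fun h => haQ (Set.mem_biUnion hi h)⟩)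
    · exact .inl ⟨haW, haP⟩
  have hpt : ∀ a, ∑ i ∈ Λ, ((P i).indicator (1 : α → ℤ) a - (Q i).indicator 1 a) =
      (W \ ⋃ i ∈ Λ, Q i).indicator 1 a - (W \ ⋃ i ∈ Λ, P i).indicator 1 a := fun a => by
    rw [Finset.sum_sub_distrib, ← Finset.indicator_biUnion_apply Λ P hP,
      ← Finset.indicator_biUnion_apply Λ Q hQ]
    by_cases haP : a ∈ ⋃ i ∈ Λ, P i <;> by_cases haQ : a ∈ ⋃ i ∈ Λ, Q i <;>
      by_cases haW : a ∈ W <;> simp only [Set.indicator, haP, haQ, haW, Set.mem_sdiff] <;>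
      simp only [Set.mem_iUnion₂, exists_prop] at haP haQ <;> try rfl
    · obtain ⟨i, hi, hai⟩ := haP
      exact absurd (hPQW i hi ⟨hai, fun h => haQ ⟨i, hi, h⟩⟩) haW
    · obtain ⟨i, hi, hai⟩ := haQ
      exact absurd (hQPW i hi ⟨hai, fun h => haP ⟨i, hi, h⟩⟩) haW
  rw [Finset.sum_congr rfl fun i hi => ncard_sdiff_sub_ncard_sdiff_eq_finsum (hPQ i hi)
    (hQP i hi), sum_finsum_comm _ _ fun i hi =>
    hasFiniteSupport_indicator_sub_indicator (hPQ i hi) (hQP i hi), finsum_congr hpt,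
    finsum_sub_distrib (hWQ.subset Set.support_indicator_subset)
      (hW.subset Set.support_indicator_subset), finsum_indicator_one hWQ, finsum_indicator_one hW]

lemma sdiff_image_subset_inter {g : Equiv.Perm α} {S T L : Set α} (hT : ∀ x ∉ T, g x = x)
    (hL : L ⊆ S) : L \ g '' L ⊆ T ∩ S :=
  fun x hx => ⟨by_contra fun hxT => hx.2 ⟨x, hx.1, hT x hxT⟩, hL hx.1⟩

lemma image_sdiff_subset_inter {g : Equiv.Perm α} {S T L : Set α} (hT : ∀ x ∉ T, g x = x)
    (hS : g '' S = S) (hL : L ⊆ S) : g '' L \ L ⊆ T ∩ S := by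
  rintro _ ⟨⟨y, hy, rfl⟩, hyL⟩
  exact ⟨by_contra fun h => hyL ((g.injective (hT _ h)).symm ▸ hy),
    hS ▸ Set.mem_image_of_mem g (hL hy)⟩

end Counting

theorem stmt9_general {N : ℕ} (S : Set (Fin N → ℤ)) (hS : IsOrthohedral S) (k : ℕ) (hk : 0 < k)
    (g : Equiv.Perm (Fin N → ℤ)) (hg : IsPeiPerm S g)
    (T : Set (Fin N → ℤ)) (hT : IsOrthohedral T) (hTrk : orthRank T ≤ k)
    (hsupp : ∀ x ∉ T, g x = x)
    (Λ : Finset (Set (Fin N → ℤ)))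
    (hΛorth : ∀ L ∈ Λ, IsOrthantOfRank L k ∧ L ⊆ S)
    (hdisj : (Λ : Set (Set (Fin N → ℤ))).PairwiseDisjoint id)
    (hiso : ∀ L ∈ Λ, IsometricOn (⇑g) L ∧ Commensurable L (⇑g '' L))
    (hrep : ∀ L', IsOrthantOfRank L' k → L' ⊆ T ∩ S → ∃ L ∈ Λ, Commensurable L L') :
    (∑ L ∈ Λ, ((heightAt (L \ (⇑g '' L)) (k - 1) : ℤ)
      - (heightAt ((⇑g '' L) \ L) (k - 1) : ℤ))) = 0 := by
  obtain ⟨j, rfl⟩ : ∃ j, k = j + 1 := ⟨k - 1, by omega⟩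
  have hgL : ∀ L ∈ Λ, IsOrthantOfRank (g '' L) (j + 1) := fun L hL =>
    (hiso L hL).1.isOrthantOfRank_image (hΛorth L hL).1
  have hgS : ⇑g '' S = S := Set.image_perm fun x hx => by_contra fun h => hx (hg.2 x h)
  have hgTS : ⇑g '' (T ∩ S) = T ∩ S := Set.image_perm fun x hx =>
    ⟨by_contra fun h => hx (hsupp x h), by_contra fun h => hx (hg.2 x h)⟩
  rw [Nat.add_sub_cancel]
  calc ∑ L ∈ Λ, ((heightAt (L \ g '' L) j : ℤ) - heightAt (g '' L \ L) j)
      = ∑ L ∈ Λ, (((germsIn j L \ germsIn j (g '' L)).ncard : ℤ) -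
          (germsIn j (g '' L) \ germsIn j L).ncard) := Finset.sum_congr rfl fun L hL => by
        rw [heightAt_sdiff (hgL L hL).isOrthant, heightAt_sdiff (hΛorth L hL).1.isOrthant]
    _ = (germsIn j (T ∩ S) \ ⋃ L ∈ Λ, germsIn j (g '' L)).ncard -
          (germsIn j (T ∩ S) \ ⋃ L ∈ Λ, germsIn j L).ncard :=
      sum_ncard_sdiff_sub_ncard_sdiff Λ
        (fun L hL L' hL' hne => disjoint_germsIn (hdisj hL hL' hne) j)
        (fun L hL L' hL' hne =>
          disjoint_germsIn ((Set.disjoint_image_iff g.injective).2 (hdisj hL hL' hne)) j)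
        (fun L hL => finite_germsIn_sdiff_of_commensurable (hΛorth L hL).1 (hgL L hL) (hiso L hL).2)
        (fun L hL => finite_germsIn_sdiff_of_commensurable (hgL L hL) (hΛorth L hL).1
          (hiso L hL).2.symm)
        (fun L hL => germsIn_sdiff_subset (hgL L hL).isOrthant
          (sdiff_image_subset_inter hsupp (hΛorth L hL).2) j)
        (fun L hL => germsIn_sdiff_subset (hΛorth L hL).1.isOrthant
          (image_sdiff_subset_inter hsupp hgS (hΛorth L hL).2) j)
        (finite_germsIn_sdiff_biUnion (hT.inter hS)
          ((orthRank_mono Set.inter_subset_left).trans hTrk) (fun L hL => (hΛorth L hL).1) hrep)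
    _ = 0 := by
      rw [← hg.image_germMap_germsIn_sdiff hgTS,
        Set.ncard_image_of_injective _ hg.germMap_injective, sub_self]

/-- the total corank-1 germ flow of an element of `C(Γ^k(S))` vanishes. -/
theorem stmt9 {N : ℕ} (S : Set (Fin N → ℤ)) (hS : IsOrthohedral S) (k : ℕ) (hk : 0 < k)
    (g : Equiv.Perm (Fin N → ℤ)) (hg : IsPeiPerm S g) (hrk : rankLE g k)
    (hfix : FixesGerm S k g)
    (T : Set (Fin N → ℤ)) (hT : IsOrthohedral T) (hTrk : orthRank T ≤ k)
    (hsupp : ∀ x ∉ T, g x = x)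
    (Λ : Finset (Set (Fin N → ℤ)))
    (hΛorth : ∀ L ∈ Λ, IsOrthantOfRank L k ∧ L ⊆ S)
    (hdisj : (Λ : Set (Set (Fin N → ℤ))).PairwiseDisjoint id)
    (hiso : ∀ L ∈ Λ, IsometricOn (⇑g) L ∧ Commensurable L (⇑g '' L))
    (hrep : ∀ L', IsOrthantOfRank L' k → L' ⊆ T ∩ S → ∃ L ∈ Λ, Commensurable L L') :
    (∑ L ∈ Λ, ((heightAt (L \ (⇑g '' L)) (k - 1) : ℤ)
      - (heightAt ((⇑g '' L) \ L) (k - 1) : ℤ))) = 0 :=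
  stmt9_general S hS k hk g hg T hT hTrk hsupp Λ hΛorth hdisj hiso hrep

end PeiPaper
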